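/- Let (M_n) be positive integers with M_{n+1} ≥ q·M_n for q > 1, and f one-periodic, mean zero, of bounded variation with V(f) ≤ 1. Then there is a constant C (depending only on q and V(f)) such that |∫_{[0,1)} f(M_n x) f(M_{n+k} x) dx| ≤ C · ‖f‖₂ · q^{-k/2} for all n and all k ≥ 1. -/

import Mathlib

/-!
Cut `[0, 1]` into the `b = M (n + k)` intervals of length `1 / b`. On each of them `x ↦ f (b x)`
runs through a full period, so it has mean zero, and `f (a x)` (with `a = M n`) may be replaced by
its deviation from its value at the left endpoint, which is bounded by its variation there.
Summing, the correlation is at most `Var(f (a ·), [0, 1]) · ‖f‖₁ / b ≤ 2 (a / b) ‖f‖₂`, and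
lacunarity gives `a / b ≤ q ^ (-k)`, even better than the claimed `q ^ (-k / 2)`. The factor `2`
pays for passing from the half-open period `[0, 1)` to the closed one.
-/

open Real MeasureTheory Set Filter Topology
open scoped ENNReal

theorem eVariationOn_Icc_le_two_mul_Ico {E : Type*} [PseudoEMetricSpace E] [CompleteSpace E]
    {f : ℝ → E} {a b : ℝ} (hab : a < b) (hf : f b = f a) :
    eVariationOn f (Icc a b) ≤ 2 * eVariationOn f (Ico a b) := by
  set V := eVariationOn f (Ico a b)
  by_cases hV : V = ⊤
  · simp [hV]
  have hIio : Icc a b ∩ Iio b = Ico a b := by grind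
  obtain ⟨l, hl⟩ := BoundedVariationOn.exists_tendsto_left (s := Ico a b) hV b
  rw [Ico_inter_Iio, min_self] at hl
  have hsplit := eVariationOn.eVariationOn_on_inter_Iic_eq_Iio_add_edist (s := Icc a b)
    (by rw [hIio]; exact right_nhdsWithin_Ico_neBot hab) (right_mem_Icc.2 hab.le)
    (by rwa [hIio])
  rw [inter_eq_left.2 Icc_subset_Iic_self, hIio, hf] at hsplit
  have hjump : edist (f a) l ≤ V := by
    have := right_nhdsWithin_Ico_neBot hab
    refine le_of_tendsto (tendsto_const_nhds.edist hl) ?_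
    filter_upwards [self_mem_nhdsWithin] with y hy
    exact eVariationOn.edist_le f (left_mem_Ico.2 hab) hy
  rw [hsplit, two_mul]
  exact add_le_add le_rfl hjump

theorem Function.Periodic.eVariationOn_Icc_zero_nat_mul {E : Type*} [PseudoEMetricSpace E]
    {f : ℝ → E} {c : ℝ} (hf : Function.Periodic f c) (hc : 0 ≤ c) (n : ℕ) :
    eVariationOn f (Icc 0 (n * c)) = n * eVariationOn f (Icc 0 c) := by
  have hshift (j : ℕ) :
      eVariationOn f (Icc (j * c) ((j + 1 : ℕ) * c)) = eVariationOn f (Icc 0 c) := by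
    have h := eVariationOn.comp_eq_of_monotoneOn f (· + j * c)
      ((monotone_id.add_const _).monotoneOn _) (t := Icc 0 c)
    rw [image_add_const_Icc, zero_add] at h
    rw [Nat.cast_succ, add_one_mul, add_comm _ c, ← h]
    exact eVariationOn.eq_of_eqOn fun x _ => hf.nat_mul j x
  have hmono : Monotone fun j : ℕ => (j : ℝ) * c := fun i j hij => by
    dsimp only; gcongr
  have := eVariationOn.sum' f hmono (n := n)
  simp only [Nat.cast_zero, zero_mul, hshift, Finset.sum_const, Finset.card_range,
    nsmul_eq_mul] at this
  exact this.symm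

theorem eVariationOn_comp_mul_left_Icc {E : Type*} [PseudoEMetricSpace E] (f : ℝ → E)
    {a : ℝ} (ha : 0 < a) (c d : ℝ) :
    eVariationOn (fun x => f (a * x)) (Icc c d) = eVariationOn f (Icc (a * c) (a * d)) := by
  rw [← image_mul_left_Icc' ha]
  exact eVariationOn.comp_eq_of_monotoneOn f (a * ·)
    ((monotone_mul_left_of_nonneg ha.le).monotoneOn _)

theorem Function.Periodic.eVariationOn_comp_nat_mul_le {E : Type*} [PseudoEMetricSpace E]
    [CompleteSpace E] {f : ℝ → E} (hf : Function.Periodic f 1) {m : ℕ} (hm : 0 < m) :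
    eVariationOn (fun x => f (m * x)) (Icc 0 1) ≤ 2 * m * eVariationOn f (Ico 0 1) := by
  have hm' : (0 : ℝ) < m := Nat.cast_pos.2 hm
  rw [eVariationOn_comp_mul_left_Icc f hm', mul_zero,
    hf.eVariationOn_Icc_zero_nat_mul zero_le_one, mul_comm 2, mul_assoc]
  gcongr
  exact eVariationOn_Icc_le_two_mul_Ico zero_lt_one (by simpa using hf 0)

theorem abs_intervalIntegral_mul_le_of_integral_eq_zero {g φ : ℝ → ℝ} {c d : ℝ}
    (hcd : c ≤ d) (hg : BoundedVariationOn g (Icc c d)) (hφ : IntervalIntegrable φ volume c d)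
    (hφ0 : ∫ x in c..d, φ x = 0) (hgφ : IntervalIntegrable (fun x => g x * φ x) volume c d) :
    |∫ x in c..d, g x * φ x| ≤ (eVariationOn g (Icc c d)).toReal * ∫ x in c..d, |φ x| := by
  set V := (eVariationOn g (Icc c d)).toReal
  have hcentre : ∫ x in c..d, g x * φ x = ∫ x in c..d, (g x - g c) * φ x := by
    simp_rw [sub_mul]
    rw [intervalIntegral.integral_sub hgφ (hφ.const_mul _), intervalIntegral.integral_const_mul,
      hφ0, mul_zero, sub_zero]
  have hosc : ∀ x ∈ Ioc c d, ‖(g x - g c) * φ x‖ ≤ V * |φ x| := fun x hx => by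
    rw [norm_mul, Real.norm_eq_abs, ← Real.dist_eq]
    exact mul_le_mul_of_nonneg_right (hg.dist_le (Ioc_subset_Icc_self hx) (left_mem_Icc.2 hcd))
      (abs_nonneg _)
  rw [hcentre, ← intervalIntegral.integral_const_mul, ← Real.norm_eq_abs]
  exact intervalIntegral.norm_integral_le_of_norm_le hcd (ae_of_all _ hosc) (hφ.abs.const_mul V)

theorem Function.Periodic.intervalIntegral_comp_mul_left_nat_div {h : ℝ → ℝ}
    (hh : Function.Periodic h 1) {b : ℝ} (hb : 0 < b) (i : ℕ) :
    ∫ x in (i / b)..((i + 1) / b), h (b * x) = b⁻¹ * ∫ x in 0..1, h x := by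
  rw [intervalIntegral.integral_comp_mul_left h hb.ne', mul_div_cancel₀ _ hb.ne',
    mul_div_cancel₀ _ hb.ne', smul_eq_mul, hh.intervalIntegral_add_eq (i : ℝ) 0, zero_add]

theorem abs_intervalIntegral_mul_comp_nat_mul_le {g h : ℝ → ℝ}
    (hg : BoundedVariationOn g (Icc 0 1)) (hh : Function.Periodic h 1)
    (hhi : IntervalIntegrable h volume 0 1) (hh0 : ∫ x in 0..1, h x = 0) {b : ℕ} (hb : 0 < b)
    (hgh : IntervalIntegrable (fun x => g x * h (b * x)) volume 0 1) :
    |∫ x in 0..1, g x * h (b * x)| ≤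
      (eVariationOn g (Icc 0 1)).toReal / b * ∫ x in 0..1, |h x| := by
  have hb' : (0 : ℝ) < b := Nat.cast_pos.2 hb
  set v : ℕ → ℝ := fun i => i / b
  have hv : Monotone v := fun i j hij => by dsimp only [v]; gcongr
  have hv0 : v 0 = 0 := by simp [v]
  have hvb : v b = 1 := div_self hb'.ne'
  have hvsucc (i : ℕ) : v (i + 1) = (i + 1) / b := by simp [v]
  have hsub {i : ℕ} (hi : i < b) : Icc (v i) (v (i + 1)) ⊆ Icc 0 1 := by
    rw [← hv0, ← hvb]; exact Icc_subset_Icc (hv i.zero_le) (hv hi)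
  have huIcc {i : ℕ} (hi : i < b) : uIcc (v i) (v (i + 1)) ⊆ uIcc 0 1 := by
    rw [uIcc_of_le zero_le_one, uIcc_of_le (hv i.le_succ)]
    exact hsub hi
  have hVfin : ∀ i < b, eVariationOn g (Icc (v i) (v (i + 1))) ≠ ⊤ := fun i hi =>
    ne_top_of_le_ne_top hg (eVariationOn.mono g (hsub hi))
  have hhb (i : ℕ) : IntervalIntegrable (fun x => h (b * x)) volume (v i) (v (i + 1)) := by
    rw [hvsucc]
    exact_mod_cast ((hh.intervalIntegrable₀ one_ne_zero hhi) i (i + 1)).comp_mul_left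
  have hpiece (i : ℕ) (hi : i < b) :
      |∫ x in v i..v (i + 1), g x * h (b * x)| ≤
        (eVariationOn g (Icc (v i) (v (i + 1)))).toReal *
          ((b : ℝ)⁻¹ * ∫ x in 0..1, |h x|) := by
    have hmean : ∫ x in v i..v (i + 1), h (b * x) = 0 := by
      rw [hvsucc, hh.intervalIntegral_comp_mul_left_nat_div hb', hh0, mul_zero]
    have habs : ∫ x in v i..v (i + 1), |h (b * x)| = (b : ℝ)⁻¹ * ∫ x in 0..1, |h x| := by
      rw [hvsucc]
      have hhabs : Function.Periodic (fun x => |h x|) 1 := fun x => by simp only [hh x]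
      exact hhabs.intervalIntegral_comp_mul_left_nat_div hb' i
    rw [← habs]
    exact abs_intervalIntegral_mul_le_of_integral_eq_zero (hv i.le_succ) (hg.mono (hsub hi))
      (hhb i) hmean (hgh.mono_set (huIcc hi))
  have hsumV : ∑ i ∈ Finset.range b, (eVariationOn g (Icc (v i) (v (i + 1)))).toReal =
      (eVariationOn g (Icc 0 1)).toReal := by
    rw [← ENNReal.toReal_sum fun i hi => hVfin i (Finset.mem_range.1 hi), eVariationOn.sum' g hv,
      hv0, hvb]
  calc |∫ x in 0..1, g x * h (b * x)|
      = |∑ i ∈ Finset.range b, ∫ x in v i..v (i + 1), g x * h (b * x)| := by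
        rw [intervalIntegral.sum_integral_adjacent_intervals (a := v) (n := b)
          fun i hi => hgh.mono_set (huIcc hi), hv0, hvb]
    _ ≤ ∑ i ∈ Finset.range b, |∫ x in v i..v (i + 1), g x * h (b * x)| :=
        Finset.abs_sum_le_sum_abs _ _
    _ ≤ ∑ i ∈ Finset.range b,
          (eVariationOn g (Icc (v i) (v (i + 1)))).toReal *
            ((b : ℝ)⁻¹ * ∫ x in 0..1, |h x|) :=
        Finset.sum_le_sum fun i hi => hpiece i (Finset.mem_range.1 hi)
    _ = (eVariationOn g (Icc 0 1)).toReal / b * ∫ x in 0..1, |h x| := by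
        rw [← Finset.sum_mul, hsumV]; ring

theorem Function.Periodic.dist_le_eVariationOn_Ico {f : ℝ → ℝ} (hf : Function.Periodic f 1)
    (hV : BoundedVariationOn f (Ico 0 1)) (x : ℝ) :
    dist (f x) (f 0) ≤ (eVariationOn f (Ico 0 1)).toReal := by
  have hfract : f (Int.fract x) = f x := by
    simpa [Int.self_sub_floor] using hf.sub_int_mul_eq (n := ⌊x⌋) (x := x)
  rw [← hfract]
  exact hV.dist_le ⟨Int.fract_nonneg x, Int.fract_lt_one x⟩ ⟨le_rfl, zero_lt_one⟩

theorem Measurable.intervalIntegrable_of_abs_le {g : ℝ → ℝ} (hg : Measurable g) {C : ℝ}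
    (hC : ∀ x, |g x| ≤ C) (c d : ℝ) : IntervalIntegrable g volume c d :=
  ⟨.of_bound measure_Ioc_lt_top hg.aestronglyMeasurable C (ae_of_all _ hC),
    .of_bound measure_Ioc_lt_top hg.aestronglyMeasurable C (ae_of_all _ hC)⟩

theorem intervalIntegral_abs_le_sqrt_integral_sq {g : ℝ → ℝ}
    (hg : IntervalIntegrable g volume 0 1)
    (hg2 : IntervalIntegrable (fun x => g x ^ 2) volume 0 1) :
    ∫ x in 0..1, |g x| ≤ √(∫ x in 0..1, g x ^ 2) := by
  set L := ∫ x in 0..1, |g x|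
  have hvar : 0 ≤ ∫ x in 0..1, (|g x| - L) ^ 2 :=
    intervalIntegral.integral_nonneg zero_le_one fun x _ => sq_nonneg _
  have hexpand : ∫ x in 0..1, (|g x| - L) ^ 2 = (∫ x in 0..1, g x ^ 2) - L ^ 2 := by
    simp_rw [sub_sq, sq_abs]
    have hcross := hg.abs.const_mul 2 |>.mul_const L
    rw [intervalIntegral.integral_add (hg2.sub hcross) intervalIntegrable_const,
      intervalIntegral.integral_sub hg2 hcross, intervalIntegral.integral_mul_const,
      intervalIntegral.integral_const_mul, intervalIntegral.integral_const]
    simp only [sub_zero, one_smul]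
    ring
  exact Real.le_sqrt_of_sq_le (by linarith)

theorem pow_mul_le_of_mul_le_succ {u : ℕ → ℝ} {q : ℝ} (hq : 0 ≤ q)
    (hu : ∀ n, q * u n ≤ u (n + 1)) (n k : ℕ) : q ^ k * u n ≤ u (n + k) := by
  induction k with
  | zero => simp
  | succ k ih =>
    calc q ^ (k + 1) * u n = q * (q ^ k * u n) := by ring
      _ ≤ q * u (n + k) := mul_le_mul_of_nonneg_left ih hq
      _ ≤ u (n + (k + 1)) := hu (n + k)

theorem div_le_rpow_neg_of_mul_le_succ {u : ℕ → ℝ} {q : ℝ} (hq : 0 < q)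
    (hu : ∀ n, q * u n ≤ u (n + 1)) (n k : ℕ) (hpos : 0 < u (n + k)) :
    u n / u (n + k) ≤ q ^ (-(k : ℝ)) := by
  rw [rpow_neg hq.le, rpow_natCast, div_le_iff₀ hpos, inv_mul_eq_div,
    le_div_iff₀ (pow_pos hq k), mul_comm]
  exact pow_mul_le_of_mul_le_succ hq.le hu n k

theorem Function.Periodic.abs_intervalIntegral_comp_mul_mul_comp_mul_le {f : ℝ → ℝ}
    (hf : Function.Periodic f 1) (hmeas : Measurable f) (hV : BoundedVariationOn f (Ico 0 1))
    (hmean : ∫ x in 0..1, f x = 0) {a b : ℕ} (ha : 0 < a) (hb : 0 < b) :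
    |∫ x in 0..1, f (a * x) * f (b * x)| ≤
      2 * (eVariationOn f (Ico 0 1)).toReal * a / b * √(∫ x in 0..1, f x ^ 2) := by
  set V := (eVariationOn f (Ico 0 1)).toReal
  have hbdd (x : ℝ) : |f x| ≤ |f 0| + V := by
    have hdist := hf.dist_le_eVariationOn_Ico hV x
    rw [Real.dist_eq] at hdist
    linarith [abs_sub_abs_le_abs_sub (f x) (f 0)]
  have hprod (c d x : ℝ) : |f (c * x) * f (d * x)| ≤ (|f 0| + V) ^ 2 := by
    rw [abs_mul, sq]
    exact mul_le_mul (hbdd _) (hbdd _) (abs_nonneg _) ((abs_nonneg _).trans (hbdd 0))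
  have hvarg : eVariationOn (fun x => f (a * x)) (Icc 0 1) ≤ 2 * a * eVariationOn f (Ico 0 1) :=
    hf.eVariationOn_comp_nat_mul_le ha
  have hvarg_ne_top : 2 * a * eVariationOn f (Ico 0 1) ≠ ⊤ :=
    ENNReal.mul_ne_top (by finiteness) hV
  have hvarg_fin : BoundedVariationOn (fun x => f (a * x)) (Icc 0 1) :=
    ne_top_of_le_ne_top hvarg_ne_top hvarg
  have hcorr := abs_intervalIntegral_mul_comp_nat_mul_le hvarg_fin hf
    (hmeas.intervalIntegrable_of_abs_le hbdd 0 1) hmean hb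
    ((hmeas.comp (measurable_const_mul _)).mul (hmeas.comp (measurable_const_mul _))
      |>.intervalIntegrable_of_abs_le (hprod a b) 0 1)
  have hL1L2 := intervalIntegral_abs_le_sqrt_integral_sq
    (hmeas.intervalIntegrable_of_abs_le hbdd 0 1)
    ((hmeas.pow_const 2).intervalIntegrable_of_abs_le
      (fun x => by simpa [← sq] using hprod 1 1 x) 0 1)
  refine hcorr.trans (mul_le_mul ?_ hL1L2 (intervalIntegral.integral_nonneg zero_le_one
    fun x _ => abs_nonneg _) (by positivity))
  gcongr
  rw [mul_right_comm]
  simpa [V] using ENNReal.toReal_mono hvarg_ne_top hvarg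

/-- Exponential correlation decay of a lacunary system: for a Hadamard lacunary sequence
with ratio `q > 1` and a one-periodic, mean-zero function of total variation at most one,
`|∫₀¹ f(M_n x) f(M_{n+k} x) dx| ≤ C ‖f‖₂ q^{-k/2}` for all `n` and all `k ≥ 1`. -/
theorem stmt_10 (q : ℝ) (hq : 1 < q) :
    ∃ C > (0 : ℝ), ∀ (M : ℕ → ℕ), (∀ n, 0 < M n) → (∀ n, q * M n ≤ M (n + 1)) →
      ∀ f : ℝ → ℝ, Measurable f →
        (∀ x : ℝ, f (x + 1) = f x) →
        eVariationOn f (Set.Ico (0 : ℝ) 1) ≤ 1 →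
        (∫ x in (0:ℝ)..1, f x) = 0 →
        ∀ (n k : ℕ), 1 ≤ k →
          |∫ x in (0:ℝ)..1, f ((M n : ℝ) * x) * f ((M (n + k) : ℝ) * x)| ≤
            C * Real.sqrt (∫ x in (0:ℝ)..1, f x ^ 2) * q ^ (-(k : ℝ) / 2) := by
  refine ⟨2, two_pos, fun M hM hlac f hmeas hper hvar hmean n k _ => ?_⟩
  have hq0 : 0 < q := zero_lt_one.trans hq
  have hb : (0 : ℝ) < M (n + k) := Nat.cast_pos.2 (hM _)
  have hV : (eVariationOn f (Ico 0 1)).toReal ≤ 1 :=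
    ENNReal.toReal_le_of_le_ofReal zero_le_one (by simpa using hvar)
  have hdecay : (M n : ℝ) / M (n + k) ≤ q ^ (-(k : ℝ) / 2) :=
    (div_le_rpow_neg_of_mul_le_succ (u := fun n => (M n : ℝ)) hq0 hlac n k hb).trans
      (rpow_le_rpow_of_exponent_le hq.le (by linarith [k.cast_nonneg (α := ℝ)]))
  calc |∫ x in (0:ℝ)..1, f (M n * x) * f (M (n + k) * x)|
      ≤ 2 * (eVariationOn f (Ico 0 1)).toReal * M n / M (n + k) *
          √(∫ x in (0:ℝ)..1, f x ^ 2) :=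
        Function.Periodic.abs_intervalIntegral_comp_mul_mul_comp_mul_le hper hmeas
          (ne_top_of_le_ne_top ENNReal.one_ne_top hvar) hmean (hM n) (hM _)
    _ ≤ 2 * 1 * M n / M (n + k) * √(∫ x in (0:ℝ)..1, f x ^ 2) := by gcongr
    _ = 2 * √(∫ x in (0:ℝ)..1, f x ^ 2) * (M n / M (n + k)) := by ring
    _ ≤ 2 * √(∫ x in (0:ℝ)..1, f x ^ 2) * q ^ (-(k : ℝ) / 2) := by gcongr
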